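/- For any Dynkin quiver Q on Δ, the map φ_Q : Δ̂₀ → Φ⁺×ℤ is a bijection. -/

import Mathlib

noncomputable section

open scoped BigOperators

/-- A finite Cartan datum: a connected Dynkin diagram of finite type with vertex set `I`,
Cartan matrix `c`, symmetrizers `d`, simple roots `α`, fundamental weights `ϖ`, an invariant
symmetric bilinear form `form` (normalized so that `(α,α) = 2` for short roots, i.e. some
`d i = 1`), simple reflections `s` acting on the weight lattice `V`, the set of positive
roots `Φ`, the longest element `w0` (with induced involution `star`), and Coxeter number
`hcox`. -/
structure SSDatum where
  I : Type
  [fintypeI : Fintype I]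
  [decEqI : DecidableEq I]
  [nonemptyI : Nonempty I]
  V : Type
  [acgV : AddCommGroup V]
  [modV : Module ℚ V]
  [decEqV : DecidableEq V]
  c : I → I → ℤ
  d : I → ℤ
  α : I → V
  ϖ : I → V
  form : V → V → ℚ
  s : I → (V ≃ₗ[ℚ] V)
  Φ : Finset V
  w0 : V ≃ₗ[ℚ] V
  star : I → I
  hcox : ℤ
  c_diag : ∀ i, c i i = 2
  c_nonpos : ∀ i j, i ≠ j → c i j ≤ 0
  c_zero_sym : ∀ i j, c i j = 0 → c j i = 0
  connected : ∀ i j, Relation.ReflTransGen (fun a b => a ≠ b ∧ c a b ≠ 0) i j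
  d_pos : ∀ i, 0 < d i
  d_one : ∃ i, d i = 1
  d_symmetrize : ∀ i j, d i * c i j = d j * c j i
  exists_basis : ∃ b : Module.Basis I ℚ V, ∀ i, b i = ϖ i
  form_symm : ∀ x y, form x y = form y x
  form_add : ∀ x y z, form (x + y) z = form x z + form y z
  form_smul : ∀ (a : ℚ) (x y), form (a • x) y = a * form x y
  form_alpha : ∀ i j, form (α i) (α j) = (d i : ℚ) * (c i j : ℚ)
  form_alpha_omega : ∀ i j, form (α i) (ϖ j) = if i = j then (d i : ℚ) else 0
  form_inv : ∀ i x y, form (s i x) (s i y) = form x y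
  s_omega : ∀ i j, s i (ϖ j) = ϖ j - (if i = j then (1 : ℚ) else 0) • α i
  s_alpha : ∀ i j, s i (α j) = α j - ((c i j : ℚ)) • α i
  alpha_mem : ∀ i, α i ∈ Φ
  zero_not_mem : (0 : V) ∉ Φ
  pos_comb : ∀ β ∈ Φ, ∃ f : I → ℕ, β = ∑ i, (f i : ℚ) • α i
  s_perm : ∀ i, ∀ β ∈ Φ, β ≠ α i → s i β ∈ Φ
  w0_mem : w0 ∈ Subgroup.closure (Set.range s)
  w0_alpha : ∀ i, w0 (α i) = - α (star i)
  star_invol : ∀ i, star (star i) = i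
  w0_neg : ∀ β ∈ Φ, -(w0 β) ∈ Φ
  hcox_pos : 0 < hcox
  hcox_card : hcox * (Fintype.card I : ℤ) = 2 * (Φ.card : ℤ)

attribute [instance] SSDatum.fintypeI SSDatum.decEqI SSDatum.nonemptyI
attribute [instance] SSDatum.acgV SSDatum.modV SSDatum.decEqV

namespace SSDatum

variable (D : SSDatum)

/-- The underlying graph of the Dynkin diagram. -/
def graph : SimpleGraph D.I where
  Adj a b := a ≠ b ∧ D.c a b ≠ 0
  symm := by
    constructor
    intro a b h
    exact ⟨h.1.symm, fun hz => h.2 (D.c_zero_sym b a hz)⟩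
  loopless := by
    constructor
    intro a h
    exact h.1 rfl

/-- The graph distance `d(i,j)` in the Dynkin diagram. -/
def dist (i j : D.I) : ℕ := D.graph.dist i j

/-- The product `s_{i_1} ⋯ s_{i_r}` of simple reflections along a word. -/
def wordProd (l : List D.I) : D.V ≃ₗ[ℚ] D.V := (l.map D.s).prod

/-- The length of an element of the Weyl group. -/
def len (w : D.V ≃ₗ[ℚ] D.V) : ℕ :=
  sInf {n | ∃ l : List D.I, l.length = n ∧ D.wordProd l = w}

/-- A word is a reduced expression of its product. -/
def IsReducedWord (l : List D.I) : Prop := l.length = D.len (D.wordProd l)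

/-- The map `ŵ` on `Φ⁺ × ℤ`:
`ŵ(β,k) = (wβ, k)` if `wβ ∈ Φ⁺` and `ŵ(β,k) = (−wβ, k−1)` otherwise. -/
def hat (w : D.V ≃ₗ[ℚ] D.V) (x : D.V × ℤ) : D.V × ℤ :=
  if w x.1 ∈ D.Φ then (w x.1, x.2) else (-(w x.1), x.2 - 1)

/-- The map `(ŵ)⁻¹` on `Φ⁺ × ℤ`. -/
def hatInv (w : D.V ≃ₗ[ℚ] D.V) (x : D.V × ℤ) : D.V × ℤ :=
  if w⁻¹ x.1 ∈ D.Φ then (w⁻¹ x.1, x.2) else (-(w⁻¹ x.1), x.2 + 1)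

/-- `ξ` is a height function on the Dynkin diagram. -/
def IsHeight (ξ : D.I → ℤ) : Prop :=
  ∀ i j, D.dist i j = 1 → ξ i - ξ j = 1 ∨ ξ j - ξ i = 1

/-- `i` is a source of the Dynkin quiver `(Δ, ξ)`. -/
def IsSource (ξ : D.I → ℤ) (i : D.I) : Prop :=
  ∀ j, D.dist i j = 1 → ξ j < ξ i

/-- The height function of the reflected quiver `s_i Q`. -/
def rHeight (ξ : D.I → ℤ) (i : D.I) : D.I → ℤ :=
  fun j => if j = i then ξ i - 2 else ξ j

/-- A sequence in `I` is adapted to the Dynkin quiver `(Δ, ξ)`. -/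
def Adapted (ξ : D.I → ℤ) : List D.I → Prop
  | [] => True
  | i :: l => D.IsSource ξ i ∧ Adapted (D.rHeight ξ i) l

/-- `τ` is the Coxeter element `τ_Q` attached to the Dynkin quiver with height function `ξ`:
it has a `Q`-adapted reduced expression in which each simple reflection occurs exactly once. -/
def IsCoxeterFor (ξ : D.I → ℤ) (τ : D.V ≃ₗ[ℚ] D.V) : Prop :=
  ∃ l : List D.I, l.Nodup ∧ (∀ i, i ∈ l) ∧ D.Adapted ξ l ∧ D.wordProd l = τ

/-- `γ_i^Q = (1 - τ_Q) ϖ_i`. -/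
def gam (τ : D.V ≃ₗ[ℚ] D.V) (i : D.I) : D.V := D.ϖ i - τ (D.ϖ i)

/-- The map `φ_Q : Δ̂₀ → Φ⁺ × ℤ`, defined inductively from
`φ_Q(i, ξ_i) = (γ_i^Q, 0)` by applying `(τ̂_Q)^{∓1}` when moving `p ↦ p ± 2`. -/
def phi (ξ : D.I → ℤ) (τ : D.V ≃ₗ[ℚ] D.V) (i : D.I) (p : ℤ) : D.V × ℤ :=
  if p ≤ ξ i then (D.hat τ)^[((ξ i - p) / 2).toNat] (D.gam τ i, 0)
  else (D.hatInv τ)^[((p - ξ i) / 2).toNat] (D.gam τ i, 0)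

/-- The function `η_{i,j}^Q : ℤ → ℚ`. -/
def eta (ξ : D.I → ℤ) (τ : D.V ≃ₗ[ℚ] D.V) (i j : D.I) (u : ℤ) : ℚ :=
  if (u + ξ j - ξ i - 1) % 2 = 0 then
    D.form (D.ϖ i) ((τ ^ ((u + ξ j - ξ i - 1) / 2)) (D.gam τ j))
  else 0

end SSDatum

/-- The variable `t` of the field of formal Laurent series `ℚ((t))`. -/
def tq : LaurentSeries ℚ := HahnSeries.single 1 1

namespace SSDatum

variable (D : SSDatum)

/-- The symmetrized `t`-quantized Cartan matrix `B(t) = C(t) · D⁻¹`, where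
`C(t)_{i,i} = t + t⁻¹` and `C(t)_{i,j} = c_{i,j}` for `i ≠ j`. -/
def Bt : Matrix D.I D.I (LaurentSeries ℚ) :=
  Matrix.of fun i j =>
    (if i = j then tq + tq⁻¹ else (D.c i j : LaurentSeries ℚ)) * ((D.d j : LaurentSeries ℚ))⁻¹

/-- `b̃_{i,j}(u)`: the coefficient of `t^u` in the Laurent expansion of `(B(t)⁻¹)_{i,j}`. -/
def btilde (i j : D.I) (u : ℤ) : ℚ := ((D.Bt)⁻¹ i j).coeff u

/-- `Ñ(i,p;j,s) = b̃_{i,j}(p−s−1) − b̃_{i,j}(s−p−1) − b̃_{i,j}(p−s+1) + b̃_{i,j}(s−p+1)`. -/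
def Ncal (i : D.I) (p : ℤ) (j : D.I) (q : ℤ) : ℚ :=
  D.btilde i j (p - q - 1) - D.btilde i j (q - p - 1)
    - D.btilde i j (p - q + 1) + D.btilde i j (q - p + 1)

end SSDatum

/-!
Write `τ = s_{i_1} ⋯ s_{i_n}` with the `i_k` distinct. The map `τ̂` is a permutation of
`Φ⁺ × ℤ` that lowers the integer coordinate by at most one per step, and lowers it exactly when
it lands on a root of the inversion set `Φ⁺ ∩ τ Φ⁻`. That set has at most `n` elements and
contains the `n` distinct roots `γ_{i_k} = s_{i_1} ⋯ s_{i_{k-1}} α_{i_k}`, so it is `{γ_i}`.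
Since `τ` fixes no nonzero vector, no `τ̂`-orbit is periodic; as the level sets are finite, the
level runs from `+∞` to `-∞` along each orbit, so each orbit passes from level `1` to level `0`
exactly once, namely at one of the points `(γ_i, 0)`. Hence `(i, k) ↦ τ̂^k (γ_i, 0)` is a
bijection `I × ℤ → Φ⁺ × ℤ`, and `φ_Q(i, ξ_i - 2k) = τ̂^k (γ_i, 0)`.
-/

section LevelPerm

variable {X : Type*} (e : Equiv.Perm X) (L : X → ℤ)

def dropsToZero : Set X := {y | L y = 0 ∧ L (e⁻¹ y) = 1}

structure IsStepDescent : Prop where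
  step : ∀ x, L (e x) = L x ∨ L (e x) = L x - 1
  finite_Icc : ∀ a b, {x | L x ∈ Set.Icc a b}.Finite
  pow_apply_ne : ∀ x (n : ℕ), 0 < n → (e ^ n) x ≠ x

variable {e L}

lemma zpow_add_one_apply (k : ℤ) (x : X) : (e ^ (k + 1)) x = e ((e ^ k) x) := by
  rw [add_comm, zpow_one_add, Equiv.Perm.mul_apply]

lemma antitone_zpow_apply (hstep : ∀ x, L (e x) = L x ∨ L (e x) = L x - 1) (x : X) :
    Antitone fun k : ℤ => L ((e ^ k) x) :=
  antitone_int_of_succ_le fun k => by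
    rw [zpow_add_one_apply]
    rcases hstep ((e ^ k) x) with h | h <;> omega

lemma IsStepDescent.zpow_apply_injective (h : IsStepDescent e L) (x : X) :
    Function.Injective fun k : ℤ => (e ^ k) x := by
  suffices ∀ k m : ℤ, k < m → (e ^ k) x ≠ (e ^ m) x from fun k m hkm =>
    by_contra fun hne => ((lt_or_gt_of_ne hne).elim (this k m · hkm) (this m k · hkm.symm))
  intro k m hkm hkm'
  refine h.pow_apply_ne x (m - k).toNat (by omega) ?_
  have hsub : e ^ (m - k) = (e ^ k)⁻¹ * e ^ m := by group
  rw [← zpow_natCast, Int.toNat_of_nonneg (by omega), hsub, Equiv.Perm.mul_apply, ← hkm']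
  exact (e ^ k).symm_apply_apply x

lemma IsStepDescent.finite_setOf_zpow_apply_mem_Icc (h : IsStepDescent e L) (x : X) (a b : ℤ) :
    {k : ℤ | L ((e ^ k) x) ∈ Set.Icc a b}.Finite :=
  Set.Finite.preimage (f := fun k : ℤ => (e ^ k) x) (h.zpow_apply_injective x).injOn
    (h.finite_Icc a b)

lemma IsStepDescent.exists_zpow_apply_lt (h : IsStepDescent e L)
    (x : X) (a : ℤ) : ∃ k : ℤ, L ((e ^ k) x) < a := by
  by_contra! hlow
  refine Set.Ici_infinite (0 : ℤ) ((h.finite_setOf_zpow_apply_mem_Icc x a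
    (L ((e ^ (0 : ℤ)) x))).subset fun k hk => ⟨hlow k, antitone_zpow_apply h.step x hk⟩)

lemma IsStepDescent.exists_lt_zpow_apply (h : IsStepDescent e L)
    (x : X) (a : ℤ) : ∃ k : ℤ, a < L ((e ^ k) x) := by
  by_contra! hup
  refine Set.Iic_infinite (0 : ℤ) ((h.finite_setOf_zpow_apply_mem_Icc x
    (L ((e ^ (0 : ℤ)) x)) a).subset fun k hk => ⟨antitone_zpow_apply h.step x hk, hup k⟩)

/-- Along an orbit the level descends from `+∞` to `-∞` in steps of at most one, so it
crosses from `1` to `0` somewhere. -/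
lemma IsStepDescent.exists_zpow_apply_mem_dropsToZero (h : IsStepDescent e L)
    (x : X) : ∃ k : ℤ, (e ^ k) x ∈ dropsToZero e L := by
  have hanti := antitone_zpow_apply h.step x
  obtain ⟨k₀, hk₀⟩ := h.exists_zpow_apply_lt x 1
  obtain ⟨k₁, hk₁⟩ := h.exists_lt_zpow_apply x 0
  obtain ⟨M, hM, hMmax⟩ := Int.exists_greatest_of_bdd (P := fun k => 1 ≤ L ((e ^ k) x))
    ⟨k₀, fun k hk => le_of_not_gt fun hlt => by
      have := hanti hlt.le
      dsimp only at this
      omega⟩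
    ⟨k₁, by omega⟩
  have hnext : L ((e ^ (M + 1)) x) < 1 := lt_of_not_ge fun h1 => by have := hMmax _ h1; omega
  rw [zpow_add_one_apply] at hnext
  refine ⟨M + 1, ?_, ?_⟩
  · rw [zpow_add_one_apply]
    rcases h.step ((e ^ M) x) with hM' | hM' <;> omega
  · rw [zpow_add_one_apply, Equiv.Perm.coe_inv, Equiv.symm_apply_apply]
    rcases h.step ((e ^ M) x) with hM' | hM' <;> omega

lemma eq_zero_of_zpow_apply_mem_dropsToZero
    (hstep : ∀ x, L (e x) = L x ∨ L (e x) = L x - 1) {y : X} (hy : y ∈ dropsToZero e L)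
    {k : ℤ} (hk : (e ^ k) y ∈ dropsToZero e L) : k = 0 := by
  have hanti := antitone_zpow_apply hstep y
  have hprev : ∀ m : ℤ, e⁻¹ ((e ^ m) y) = (e ^ (m - 1)) y := fun m => by
    rw [← Equiv.Perm.mul_apply, ← zpow_neg_one, ← zpow_add, neg_add_eq_sub]
  have h₀ : L ((e ^ (0 : ℤ)) y) = 0 := hy.1
  have hprev₀ : L ((e ^ (-1 : ℤ)) y) = 1 := by simpa [hprev] using hy.2
  have hk₁ : L ((e ^ (k - 1)) y) = 1 := by rw [← hprev]; exact hk.2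
  rcases lt_trichotomy k 0 with hneg | rfl | hpos
  · have := hanti (show k ≤ -1 by omega)
    dsimp only at this
    have := hk.1
    omega
  · rfl
  · have := hanti (show 0 ≤ k - 1 by omega)
    dsimp only at this
    omega

theorem IsStepDescent.bijective_zpow_apply (h : IsStepDescent e L)
    {ι : Type*} {b : ι → X} (hb : Function.Injective b)
    (hrange : ∀ y, y ∈ dropsToZero e L ↔ ∃ i, b i = y) :
    Function.Bijective fun p : ι × ℤ => (e ^ p.2) (b p.1) := by
  refine ⟨fun ⟨i, k⟩ ⟨j, m⟩ heq => ?_, fun x => ?_⟩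
  · have hshift : (e ^ (k - m)) (b i) = b j := by
      dsimp only at heq
      rw [sub_eq_neg_add, zpow_add, Equiv.Perm.mul_apply, heq, ← Equiv.Perm.mul_apply,
        ← zpow_add, neg_add_cancel, zpow_zero, Equiv.Perm.one_apply]
    have hkm := eq_zero_of_zpow_apply_mem_dropsToZero h.step ((hrange _).2 ⟨i, rfl⟩)
      (hshift ▸ (hrange _).2 ⟨j, rfl⟩)
    rw [hkm, zpow_zero, Equiv.Perm.one_apply] at hshift
    exact Prod.ext (hb hshift) (by omega)
  · obtain ⟨k, hk⟩ := h.exists_zpow_apply_mem_dropsToZero x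
    obtain ⟨i, hi⟩ := (hrange _).1 hk
    refine ⟨(i, -k), ?_⟩
    dsimp only
    rw [hi, ← Equiv.Perm.mul_apply, ← zpow_add, neg_add_cancel, zpow_zero, Equiv.Perm.one_apply]

end LevelPerm

namespace SSDatum

variable (D : SSDatum)

def omegaBasis : Module.Basis D.I ℚ D.V := D.exists_basis.choose

lemma omegaBasis_apply (i : D.I) : D.omegaBasis i = D.ϖ i := D.exists_basis.choose_spec i

def formLeft (y : D.V) : D.V →ₗ[ℚ] ℚ where
  toFun x := D.form x y
  map_add' x x' := D.form_add x x' y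
  map_smul' a x := D.form_smul a x y

lemma formLeft_apply (x y : D.V) : D.formLeft y x = D.form x y := rfl

lemma form_sum_smul_alpha_omega (f : D.I → ℚ) (j : D.I) :
    D.form (∑ i, f i • D.α i) (D.ϖ j) = f j * D.d j := by
  rw [← formLeft_apply, map_sum]
  simp [formLeft_apply, D.form_alpha_omega]

lemma form_omega_nonneg {β : D.V} (hβ : β ∈ D.Φ) (j : D.I) : 0 ≤ D.form β (D.ϖ j) := by
  obtain ⟨f, rfl⟩ := D.pos_comb β hβ
  rw [form_sum_smul_alpha_omega]
  have := D.d_pos j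
  positivity

lemma exists_form_omega_pos {β : D.V} (hβ : β ∈ D.Φ) : ∃ j, 0 < D.form β (D.ϖ j) := by
  obtain ⟨f, rfl⟩ := D.pos_comb β hβ
  obtain ⟨j, hj⟩ : ∃ j, f j ≠ 0 := by
    by_contra! h
    exact D.zero_not_mem (by simpa [h] using hβ)
  refine ⟨j, ?_⟩
  rw [form_sum_smul_alpha_omega]
  exact mul_pos (by exact_mod_cast Nat.pos_of_ne_zero hj) (by exact_mod_cast D.d_pos j)

lemma neg_not_mem {β : D.V} (hβ : β ∈ D.Φ) : -β ∉ D.Φ := fun hneg => by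
  obtain ⟨j, hj⟩ := D.exists_form_omega_pos hβ
  have := D.form_omega_nonneg hneg j
  rw [← formLeft_apply, map_neg, formLeft_apply] at this
  linarith

lemma s_apply (i : D.I) (x : D.V) : D.s i x = x - D.omegaBasis.coord i x • D.α i := by
  have h : (D.s i : D.V →ₗ[ℚ] D.V) =
      LinearMap.id - (D.omegaBasis.coord i).smulRight (D.α i) := by
    refine D.omegaBasis.ext fun j => ?_
    simp only [LinearEquiv.coe_coe, LinearMap.sub_apply, LinearMap.id_apply,
      LinearMap.smulRight_apply, Module.Basis.coord_apply, Module.Basis.repr_self]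
    simp only [omegaBasis_apply, D.s_omega, Finsupp.single_apply, @eq_comm _ i j]
  simpa using LinearMap.congr_fun h x

lemma s_alpha_self (i : D.I) : D.s i (D.α i) = -D.α i := by
  rw [D.s_alpha, D.c_diag]
  norm_num [two_smul]

lemma s_s_apply (i : D.I) (x : D.V) : D.s i (D.s i x) = x := by
  conv_lhs => rw [D.s_apply i x]
  rw [map_sub, map_smul, s_alpha_self, D.s_apply i x]
  simp

lemma s_inv (i : D.I) : (D.s i)⁻¹ = D.s i :=
  inv_eq_of_mul_eq_one_left (LinearEquiv.ext (D.s_s_apply i))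

lemma form_s_omega_self (i : D.I) (x : D.V) :
    D.form (D.s i x) (D.ϖ i) = D.form x (D.ϖ i) - D.omegaBasis.coord i x * D.d i := by
  rw [s_apply, ← formLeft_apply, map_sub, map_smul, formLeft_apply, formLeft_apply,
    D.form_alpha_omega, if_pos rfl, smul_eq_mul]

lemma form_s_omega_of_ne {i j : D.I} (h : i ≠ j) (x : D.V) :
    D.form (D.s i x) (D.ϖ j) = D.form x (D.ϖ j) := by
  rw [s_apply, ← formLeft_apply, map_sub, map_smul, formLeft_apply, formLeft_apply,
    D.form_alpha_omega, if_neg h, smul_zero, sub_zero]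

lemma s_omega_of_ne {i j : D.I} (h : i ≠ j) : D.s i (D.ϖ j) = D.ϖ j := by
  simp [D.s_omega, h]

def IsRoot (β : D.V) : Prop := β ∈ D.Φ ∨ -β ∈ D.Φ

lemma isRoot_s_apply {β : D.V} (hβ : D.IsRoot β) (i : D.I) : D.IsRoot (D.s i β) := by
  have key : ∀ γ ∈ D.Φ, D.IsRoot (D.s i γ) := fun γ hγ => by
    by_cases h : γ = D.α i
    · subst h
      exact Or.inr (by simpa [s_alpha_self] using D.alpha_mem i)
    · exact Or.inl (D.s_perm i γ hγ h)
  rcases hβ with h | h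
  · exact key β h
  · simpa [IsRoot, or_comm] using key _ h

lemma wordProd_cons (i : D.I) (l : List D.I) :
    D.wordProd (i :: l) = D.s i * D.wordProd l := by
  simp [wordProd]

lemma wordProd_append (l₁ l₂ : List D.I) :
    D.wordProd (l₁ ++ l₂) = D.wordProd l₁ * D.wordProd l₂ := by
  simp [wordProd]

lemma wordProd_inv (l : List D.I) : (D.wordProd l)⁻¹ = D.wordProd l.reverse := by
  simp [wordProd, List.prod_inv_reverse, Function.comp_def, s_inv]

lemma isRoot_wordProd_apply {β : D.V} (hβ : D.IsRoot β) (l : List D.I) :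
    D.IsRoot (D.wordProd l β) := by
  induction l with
  | nil => simpa [wordProd] using hβ
  | cons i l ih => simpa [wordProd_cons] using D.isRoot_s_apply ih i

lemma form_wordProd_omega_of_not_mem {i : D.I} {l : List D.I} (hi : i ∉ l) (x : D.V) :
    D.form (D.wordProd l x) (D.ϖ i) = D.form x (D.ϖ i) := by
  induction l with
  | nil => simp [wordProd]
  | cons j l ih =>
    rw [List.mem_cons, not_or] at hi
    rw [wordProd_cons, LinearEquiv.mul_apply, D.form_s_omega_of_ne (Ne.symm hi.1), ih hi.2]

lemma wordProd_omega_of_not_mem {i : D.I} {l : List D.I} (hi : i ∉ l) :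
    D.wordProd l (D.ϖ i) = D.ϖ i := by
  induction l with
  | nil => simp [wordProd]
  | cons j l ih =>
    rw [List.mem_cons, not_or] at hi
    rw [wordProd_cons, LinearEquiv.mul_apply, ih hi.2, D.s_omega_of_ne (Ne.symm hi.1)]

lemma wordProd_alpha_mem_of_not_mem {i : D.I} {l : List D.I} (hi : i ∉ l) :
    D.wordProd l (D.α i) ∈ D.Φ := by
  induction l with
  | nil => simpa [wordProd] using D.alpha_mem i
  | cons j l ih =>
    rw [List.mem_cons, not_or] at hi
    rw [wordProd_cons, LinearEquiv.mul_apply]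
    refine D.s_perm j _ (ih hi.2) fun h => ?_
    have hform := D.form_wordProd_omega_of_not_mem hi.2 (D.α i)
    rw [h, D.form_alpha_omega, D.form_alpha_omega, if_neg (Ne.symm hi.1), if_pos rfl] at hform
    exact (D.d_pos i).ne (by exact_mod_cast hform)

/-- Pairing with `ϖ_i` detects the `α_i`-component that the first reflection `s_i` would add. -/
lemma s_apply_eq_of_wordProd_apply_eq {l : List D.I} (hl : l.Nodup) {x : D.V}
    (hx : D.wordProd l x = x) {j : D.I} (hj : j ∈ l) : D.s j x = x := by
  induction l with
  | nil => simp at hj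
  | cons i l ih =>
    rw [List.nodup_cons] at hl
    rw [wordProd_cons, LinearEquiv.mul_apply] at hx
    set y := D.wordProd l x with hy
    have hform := D.form_s_omega_self i y
    rw [hx, hy, D.form_wordProd_omega_of_not_mem hl.1] at hform
    have hcoord : D.omegaBasis.coord i y = 0 :=
      (mul_eq_zero.mp (by linarith)).resolve_right (Int.cast_ne_zero.mpr (D.d_pos i).ne')
    have hyx : y = x := by rw [← hx, s_apply, hcoord, zero_smul, sub_zero]
    rcases List.mem_cons.mp hj with rfl | hj
    · rw [← hyx, s_apply, hcoord, zero_smul, sub_zero]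
    · exact ih hl.2 hyx hj

def inversions (w : D.V ≃ₗ[ℚ] D.V) : Finset D.V := D.Φ.filter fun β => w⁻¹ β ∉ D.Φ

lemma card_inversions_wordProd_le (l : List D.I) :
    (D.inversions (D.wordProd l)).card ≤ l.length := by
  induction l with
  | nil => simp [inversions, wordProd]
  | cons j l ih =>
    have hsub : D.inversions (D.wordProd (j :: l)) ⊆
        insert (D.α j) ((D.inversions (D.wordProd l)).image (D.s j)) := by
      intro β hβ
      simp only [inversions, Finset.mem_filter, wordProd_cons, mul_inv_rev, s_inv,
        LinearEquiv.mul_apply] at hβ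
      by_cases hne : β = D.α j
      · exact hne ▸ Finset.mem_insert_self _ _
      · refine Finset.mem_insert_of_mem (Finset.mem_image.mpr ⟨D.s j β, ?_, D.s_s_apply j β⟩)
        exact Finset.mem_filter.mpr ⟨D.s_perm j β hβ.1 hne, hβ.2⟩
    calc _ ≤ _ := Finset.card_le_card hsub
      _ ≤ _ := Finset.card_insert_le _ _
      _ ≤ (D.inversions (D.wordProd l)).card + 1 := Nat.add_le_add_right Finset.card_image_le 1
      _ ≤ (j :: l).length := by simpa using ih

lemma inv_apply_gam (w : D.V ≃ₗ[ℚ] D.V) (i : D.I) : w⁻¹ (D.gam w i) = -D.gam w⁻¹ i := by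
  simp [gam]

lemma gam_wordProd_append_cons {l₁ l₂ : List D.I} {i : D.I} (h₁ : i ∉ l₁)
    (h₂ : i ∉ l₂) :
    D.gam (D.wordProd (l₁ ++ i :: l₂)) i = D.wordProd l₁ (D.α i) := by
  rw [gam, wordProd_append, wordProd_cons, LinearEquiv.mul_apply, LinearEquiv.mul_apply,
    D.wordProd_omega_of_not_mem h₂, D.s_omega, if_pos rfl, one_smul, map_sub,
    D.wordProd_omega_of_not_mem h₁, sub_sub_cancel]

lemma gam_mem_inversions {l : List D.I} (hl : l.Nodup) {i : D.I} (hi : i ∈ l) :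
    D.gam (D.wordProd l) i ∈ D.inversions (D.wordProd l) := by
  obtain ⟨l₁, l₂, rfl⟩ := List.append_of_mem hi
  rw [List.nodup_append, List.nodup_cons] at hl
  have h₁ : i ∉ l₁ := fun h => hl.2.2 i h i List.mem_cons_self rfl
  have h₂ : i ∉ l₂ := hl.2.1.1
  have hinv :
      (D.wordProd (l₁ ++ i :: l₂))⁻¹ = D.wordProd (l₂.reverse ++ i :: l₁.reverse) := by
    simp [wordProd_inv]
  refine Finset.mem_filter.mpr ⟨?_, ?_⟩
  · rw [D.gam_wordProd_append_cons h₁ h₂]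
    exact D.wordProd_alpha_mem_of_not_mem h₁
  · rw [inv_apply_gam, hinv,
      D.gam_wordProd_append_cons (by simpa using h₂) (by simpa using h₁)]
    exact D.neg_not_mem (D.wordProd_alpha_mem_of_not_mem (by simpa using h₂))

structure IsCoxeterWord (l : List D.I) : Prop where
  nodup : l.Nodup
  mem : ∀ i, i ∈ l

variable {D}

lemma IsCoxeterWord.eq_zero_of_wordProd_apply_eq {l : List D.I} (hl : D.IsCoxeterWord l)
    {x : D.V} (hx : D.wordProd l x = x) : x = 0 := by
  refine D.omegaBasis.forall_coord_eq_zero_iff.mp fun j => ?_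
  have h := D.s_apply_eq_of_wordProd_apply_eq hl.nodup hx (hl.mem j)
  rw [s_apply, sub_eq_self, smul_eq_zero] at h
  exact h.resolve_right fun h0 => D.zero_not_mem (h0 ▸ D.alpha_mem j)

lemma IsCoxeterWord.gam_injective {l : List D.I} (hl : D.IsCoxeterWord l) :
    Function.Injective (D.gam (D.wordProd l)) := fun i j hij => by
  have hfix : D.wordProd l (D.ϖ i - D.ϖ j) = D.ϖ i - D.ϖ j := by
    simp only [gam] at hij
    rw [map_sub]
    linear_combination (norm := module) -hij
  have hϖ : D.omegaBasis i = D.omegaBasis j := by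
    rw [omegaBasis_apply, omegaBasis_apply, ← sub_eq_zero]
    exact hl.eq_zero_of_wordProd_apply_eq hfix
  exact D.omegaBasis.injective hϖ

/-- The `γ_i` are `|I|` distinct inversions, while a word of length `|I|` has at most `|I|`
inversions. -/
lemma IsCoxeterWord.inversions_eq {l : List D.I} (hl : D.IsCoxeterWord l) :
    D.inversions (D.wordProd l) = Finset.univ.image (D.gam (D.wordProd l)) := by
  refine (Finset.eq_of_subset_of_card_le ?_ ?_).symm
  · intro β hβ
    obtain ⟨i, -, rfl⟩ := Finset.mem_image.mp hβ
    exact D.gam_mem_inversions hl.nodup (hl.mem i)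
  · calc (D.inversions (D.wordProd l)).card ≤ l.length := D.card_inversions_wordProd_le l
      _ ≤ Fintype.card D.I := hl.nodup.length_le_card
      _ = _ := by rw [Finset.card_image_of_injective _ hl.gam_injective, Finset.card_univ]

variable (D)

abbrev PosRootPair := {x : D.V × ℤ // x.1 ∈ D.Φ}

/-- The sum over a period would be a nonzero `w`-fixed vector. -/
lemma not_periodic_of_forall_mem {w : D.V ≃ₗ[ℚ] D.V} (hw : ∀ v, w v = v → v = 0)
    {β : D.V} {n : ℕ} (hn : 0 < n) (hmem : ∀ j < n, (w ^ j) β ∈ D.Φ)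
    (hper : (w ^ n) β = β) : False := by
  set v := ∑ j ∈ Finset.range n, (w ^ j) β
  have hshift : ∑ j ∈ Finset.range n, (w ^ (j + 1)) β = w v := by
    simp only [v, map_sum, pow_succ', LinearEquiv.mul_apply]
  have hv : v = 0 := by
    refine hw v (add_right_cancel (b := β) ?_)
    have h₁ := Finset.sum_range_succ (fun j => (w ^ j) β) n
    have h₂ := Finset.sum_range_succ' (fun j => (w ^ j) β) n
    rw [hper] at h₁
    rw [pow_zero, LinearEquiv.coe_one, id_eq, hshift] at h₂
    rw [← h₁, h₂]
  obtain ⟨i, hi⟩ := D.exists_form_omega_pos (by simpa using hmem 0 hn)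
  have hsum : ∑ j ∈ Finset.range n, D.form ((w ^ j) β) (D.ϖ i) = 0 := by
    simp only [← formLeft_apply, ← map_sum]
    change D.formLeft _ v = 0
    rw [hv, map_zero]
  have := Finset.single_le_sum (f := fun j => D.form ((w ^ j) β) (D.ϖ i))
    (fun j hj => D.form_omega_nonneg (hmem j (Finset.mem_range.mp hj)) i)
    (Finset.mem_range.mpr hn)
  simp only [pow_zero, LinearEquiv.coe_one, id_eq] at this
  linarith

lemma hat_fst_mem {w : D.V ≃ₗ[ℚ] D.V} (hw : ∀ β, D.IsRoot β → D.IsRoot (w β))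
    {x : D.V × ℤ} (hx : x.1 ∈ D.Φ) : (D.hat w x).1 ∈ D.Φ := by
  unfold hat
  split_ifs with h
  · exact h
  · exact (hw _ (Or.inl hx)).resolve_left h

lemma hatInv_fst_mem {w : D.V ≃ₗ[ℚ] D.V} (hw : ∀ β, D.IsRoot β → D.IsRoot (w⁻¹ β))
    {x : D.V × ℤ} (hx : x.1 ∈ D.Φ) : (D.hatInv w x).1 ∈ D.Φ := by
  unfold hatInv
  split_ifs with h
  · exact h
  · exact (hw _ (Or.inl hx)).resolve_left h

lemma hatInv_hat (w : D.V ≃ₗ[ℚ] D.V) {x : D.V × ℤ} (hx : x.1 ∈ D.Φ) :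
    D.hatInv w (D.hat w x) = x := by
  unfold hat hatInv
  split_ifs with h₁ h₂ h₂ <;> simp_all [D.neg_not_mem hx]

lemma hat_hatInv (w : D.V ≃ₗ[ℚ] D.V) {x : D.V × ℤ} (hx : x.1 ∈ D.Φ) :
    D.hat w (D.hatInv w x) = x := by
  unfold hat hatInv
  split_ifs with h₁ h₂ h₂ <;> simp_all [D.neg_not_mem hx]

def hatPerm (l : List D.I) : Equiv.Perm D.PosRootPair where
  toFun x := ⟨D.hat (D.wordProd l) x,
    D.hat_fst_mem (fun _ hβ => D.isRoot_wordProd_apply hβ l) x.2⟩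
  invFun x := ⟨D.hatInv (D.wordProd l) x,
    D.hatInv_fst_mem (fun _ hβ => by simpa [wordProd_inv] using D.isRoot_wordProd_apply hβ _) x.2⟩
  left_inv x := Subtype.ext (D.hatInv_hat _ x.2)
  right_inv x := Subtype.ext (D.hat_hatInv _ x.2)

lemma hatPerm_snd (l : List D.I) (x : D.PosRootPair) :
    (D.hatPerm l x).1.2 = x.1.2 ∨ (D.hatPerm l x).1.2 = x.1.2 - 1 := by
  change (D.hat _ _).2 = _ ∨ (D.hat _ _).2 = _
  unfold hat
  split_ifs <;> simp

lemma hatPerm_fst_of_snd_eq {l : List D.I} {x : D.PosRootPair}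
    (h : (D.hatPerm l x).1.2 = x.1.2) : (D.hatPerm l x).1.1 = D.wordProd l x.1.1 := by
  change (D.hat _ _).2 = _ at h
  change (D.hat _ _).1 = _
  unfold hat at h ⊢
  split_ifs at h ⊢ <;> simp_all

lemma finite_setOf_snd_mem_Icc (a b : ℤ) : {x : D.PosRootPair | x.1.2 ∈ Set.Icc a b}.Finite :=
  ((D.Φ.finite_toSet.prod (Set.finite_Icc a b)).preimage Subtype.val_injective.injOn).subset
    fun x hx => ⟨x.2, hx⟩

lemma mem_dropsToZero_hatPerm {l : List D.I} {x : D.PosRootPair} :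
    x ∈ dropsToZero (D.hatPerm l) (·.1.2) ↔
      x.1.2 = 0 ∧ x.1.1 ∈ D.inversions (D.wordProd l) := by
  change x.1.2 = 0 ∧ (D.hatInv _ _).2 = 1 ↔ _
  unfold hatInv
  split_ifs <;> simp_all [inversions, x.2]

lemma coe_hatPerm_pow_apply (l : List D.I) (n : ℕ) (x : D.PosRootPair) :
    ((D.hatPerm l ^ n) x : D.V × ℤ) = (D.hat (D.wordProd l))^[n] x := by
  induction n with
  | zero => rfl
  | succ n ih => rw [pow_succ', Equiv.Perm.mul_apply, Function.iterate_succ_apply', ← ih]; rfl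

lemma coe_hatPerm_inv_pow_apply (l : List D.I) (n : ℕ) (x : D.PosRootPair) :
    (((D.hatPerm l)⁻¹ ^ n) x : D.V × ℤ) = (D.hatInv (D.wordProd l))^[n] x := by
  induction n with
  | zero => rfl
  | succ n ih => rw [pow_succ', Equiv.Perm.mul_apply, Function.iterate_succ_apply', ← ih]; rfl

variable {D}

/-- Over a period the level cannot drop, so the root coordinate just follows the `τ`-orbit. -/
lemma IsCoxeterWord.hatPerm_pow_apply_ne {l : List D.I} (hl : D.IsCoxeterWord l)
    (x : D.PosRootPair) {n : ℕ} (hn : 0 < n) : (D.hatPerm l ^ n) x ≠ x := fun hper => by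
  have hanti : Antitone fun j : ℕ => ((D.hatPerm l ^ j) x).1.2 := antitone_nat_of_succ_le
    fun j => by
      rw [pow_succ', Equiv.Perm.mul_apply]
      rcases D.hatPerm_snd l ((D.hatPerm l ^ j) x) with h | h <;> omega
  have hlevel : ∀ j ≤ n, ((D.hatPerm l ^ j) x).1.2 = x.1.2 := fun j hj =>
    le_antisymm (hanti (Nat.zero_le j)) (by simpa [hper] using hanti hj)
  have horbit : ∀ j ≤ n, ((D.hatPerm l ^ j) x).1.1 = (D.wordProd l ^ j) x.1.1 := by
    intro j hj
    induction j with
    | zero => rfl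
    | succ j ih =>
      rw [pow_succ', Equiv.Perm.mul_apply, D.hatPerm_fst_of_snd_eq, ih (by omega), pow_succ',
        LinearEquiv.mul_apply]
      rw [← Equiv.Perm.mul_apply, ← pow_succ', hlevel _ hj, hlevel _ (by omega)]
  refine D.not_periodic_of_forall_mem (fun _ => hl.eq_zero_of_wordProd_apply_eq) hn
    (fun j hj => horbit j hj.le ▸ ((D.hatPerm l ^ j) x).2) ?_
  rw [← horbit n le_rfl, hper]

def gamPoint {l : List D.I} (hl : D.IsCoxeterWord l) (i : D.I) : D.PosRootPair :=
  ⟨(D.gam (D.wordProd l) i, 0),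
    (Finset.mem_filter.mp (D.gam_mem_inversions hl.nodup (hl.mem i))).1⟩

lemma IsCoxeterWord.bijective_hatPerm_zpow_gamPoint {l : List D.I} (hl : D.IsCoxeterWord l) :
    Function.Bijective fun p : D.I × ℤ => (D.hatPerm l ^ p.2) (gamPoint hl p.1) := by
  refine IsStepDescent.bijective_zpow_apply
    ⟨D.hatPerm_snd l, D.finite_setOf_snd_mem_Icc, fun x _ hn => hl.hatPerm_pow_apply_ne x hn⟩
    (fun i j h => hl.gam_injective (congrArg (·.1.1) h)) fun y => ?_
  rw [mem_dropsToZero_hatPerm, hl.inversions_eq, Finset.mem_image]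
  simp only [Finset.mem_univ, true_and, gamPoint, Subtype.ext_iff, Prod.ext_iff]
  constructor
  · rintro ⟨h0, i, hi⟩
    exact ⟨i, hi, h0.symm⟩
  · rintro ⟨i, hi, h0⟩
    exact ⟨h0.symm, i, hi⟩

lemma IsCoxeterWord.phi_sub_two_mul {l : List D.I} (hl : D.IsCoxeterWord l) (ξ : D.I → ℤ)
    (i : D.I) (k : ℤ) :
    D.phi ξ (D.wordProd l) i (ξ i - 2 * k) = ((D.hatPerm l ^ k) (gamPoint hl i)).1 := by
  unfold phi
  split_ifs with h
  · obtain ⟨n, rfl⟩ : ∃ n : ℕ, k = n := ⟨k.toNat, by omega⟩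
    rw [show ξ i - (ξ i - 2 * n) = 2 * n by ring, Int.mul_ediv_cancel_left _ two_ne_zero,
      Int.toNat_natCast, zpow_natCast, coe_hatPerm_pow_apply]
    rfl
  · obtain ⟨n, rfl⟩ : ∃ n : ℕ, k = -n := ⟨(-k).toNat, by omega⟩
    rw [show ξ i - 2 * -(n : ℤ) - ξ i = 2 * n by ring, Int.mul_ediv_cancel_left _ two_ne_zero,
      Int.toNat_natCast, zpow_neg, zpow_natCast, ← inv_pow, coe_hatPerm_inv_pow_apply]
    rfl

end SSDatum

theorem stmt4_general (D : SSDatum) (ξ : D.I → ℤ)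
    (τ : D.V ≃ₗ[ℚ] D.V) (hτ : D.IsCoxeterFor ξ τ) :
    Set.BijOn (fun x : D.I × ℤ => D.phi ξ τ x.1 x.2)
      {x : D.I × ℤ | 2 ∣ (x.2 - ξ x.1)}
      {y : D.V × ℤ | y.1 ∈ D.Φ} := by
  obtain ⟨l, hnodup, hmem, -, rfl⟩ := hτ
  have hl : D.IsCoxeterWord l := ⟨hnodup, hmem⟩
  obtain ⟨hinj, hsurj⟩ := hl.bijective_hatPerm_zpow_gamPoint
  have hparam : ∀ x ∈ {x : D.I × ℤ | 2 ∣ (x.2 - ξ x.1)}, ∃ i k, x = (i, ξ i - 2 * k) :=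
    fun x ⟨t, ht⟩ => ⟨x.1, -t, Prod.ext rfl (by dsimp only; omega)⟩
  refine ⟨fun x hx => ?_, fun x hx y hy hxy => ?_, fun y hy => ?_⟩
  · obtain ⟨i, k, rfl⟩ := hparam x hx
    simp [hl.phi_sub_two_mul]
  · obtain ⟨i, k, rfl⟩ := hparam x hx
    obtain ⟨j, m, rfl⟩ := hparam y hy
    simp only [hl.phi_sub_two_mul] at hxy
    obtain ⟨rfl, rfl⟩ := Prod.mk_inj.mp (hinj (a₁ := (i, k)) (a₂ := (j, m)) (Subtype.ext hxy))
    rfl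
  · obtain ⟨⟨i, k⟩, hik⟩ := hsurj ⟨y, hy⟩
    refine ⟨(i, ξ i - 2 * k), ⟨-k, by ring⟩, ?_⟩
    simp only [hl.phi_sub_two_mul, hik]

/-- For any Dynkin quiver `Q` on `Δ`, the map
`φ_Q : Δ̂₀ → Φ⁺ × ℤ` is a bijection. -/
theorem stmt4 (D : SSDatum) (ξ : D.I → ℤ) (hξ : D.IsHeight ξ)
    (τ : D.V ≃ₗ[ℚ] D.V) (hτ : D.IsCoxeterFor ξ τ) :
    Set.BijOn (fun x : D.I × ℤ => D.phi ξ τ x.1 x.2)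
      {x : D.I × ℤ | 2 ∣ (x.2 - ξ x.1)}
      {y : D.V × ℤ | y.1 ∈ D.Φ} :=
  stmt4_general D ξ τ hτ
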